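/- arXiv:2103.07886 — 9 statements merged into one kernel-verified Lean document; each statement's English description precedes it below -/
import Mathlib

section
/- If D is an in-round strong oriented graph (there is a cyclic order of its vertices such that for every arc xy and every vertex z strictly between x and y in the cyclic order, zy is an arc), then for every vertex x the out-neighbourhood x⁺ induces a tournament and the in-neighbourhood x⁻ induces an acyclic digraph. -/
/-- `A` is the arc relation of an oriented graph: no loops and no digons. -/
def IsOriented {V : Type*} (A : V → V → Prop) : Prop :=
  Irreflexive A ∧ ∀ x y, A x y → ¬ A y x

/-- `D` is strong: directed path between each ordered pair of vertices. -/
def IsStrong {V : Type*} (A : V → V → Prop) : Prop :=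
  ∀ x y : V, Relation.ReflTransGen A x y

/-- The set `S` induces a tournament. -/
def TournamentOn {V : Type*} (A : V → V → Prop) (S : Set V) : Prop :=
  ∀ x ∈ S, ∀ y ∈ S, x ≠ y → A x y ∨ A y x

/-- The set `S` induces an acyclic digraph. -/
def AcyclicOn {V : Type*} (A : V → V → Prop) (S : Set V) : Prop :=
  ∀ x : V, ¬ Relation.TransGen (fun a b => a ∈ S ∧ b ∈ S ∧ A a b) x x

/-- `z` lies strictly inside the cyclic interval `]x,y[` with respect to the
cyclic order given by `σ`. -/
def CycBtw {V : Type*} [Fintype V] (σ : V ≃ Fin (Fintype.card V)) (x z y : V) : Prop :=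
  0 < (σ z - σ x).val ∧ (σ z - σ x).val < (σ y - σ x).val

/-- `D` is in-round: some cyclic order such that for every arc `xy` and every
`z ∈ ]x,y[`, `zy` is an arc. -/
def InRound {V : Type*} [Fintype V] (A : V → V → Prop) : Prop :=
  ∃ σ : V ≃ Fin (Fintype.card V), ∀ x y z : V, A x y → CycBtw σ x z y → A z y

/-! Read the cyclic order starting at `x`. Of two out-neighbours of `x`, the nearer one lies in
the interval from `x` to the farther one, so in-roundness gives an arc between them. An arc `ab`
inside `x⁻` must go forward in this reading, since otherwise `x ∈ ]a,b[` would force the arc `xb`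
against `bx`; hence `x⁻` carries no cycle. -/

theorem Fin.sub_val_rotate {n : ℕ} {i j k : Fin n} (h0 : 0 < (j - i).val)
    (h1 : (j - i).val < (k - i).val) : 0 < (k - j).val ∧ (k - j).val < (i - j).val := by
  obtain _ | n := n
  · exact i.elim0
  have hkj : k - j = (k - i) - (j - i) := by abel
  have hij : i - j = -(j - i) := by abel
  rw [hkj, Fin.sub_val_of_le h1.le, hij, Fin.val_neg', Nat.mod_eq_of_lt (by omega)]
  omega

theorem Fin.sub_val_injective {n : ℕ} (i : Fin n) :
    Function.Injective fun j : Fin n => (j - i).val := by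
  obtain _ | n := n
  · exact i.elim0
  exact fun _ _ h => sub_left_injective (Fin.ext h)

theorem Fin.sub_val_pos {n : ℕ} {i j : Fin n} (h : j ≠ i) : 0 < (j - i).val := by
  obtain _ | n := n
  · exact i.elim0
  exact Nat.pos_of_ne_zero fun h0 => h (sub_eq_zero.mp (Fin.ext h0))

namespace CycBtw

variable {V : Type*} [Fintype V] {σ : V ≃ Fin (Fintype.card V)} {x y z : V}

theorem rotate (h : CycBtw σ x z y) : CycBtw σ z y x :=
  Fin.sub_val_rotate h.1 h.2

theorem of_sub_val_lt (hzx : z ≠ x) (h : (σ z - σ x).val < (σ y - σ x).val) :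
    CycBtw σ x z y :=
  ⟨Fin.sub_val_pos (σ.injective.ne hzx), h⟩

end CycBtw

theorem acyclicOn_of_lt {V β : Type*} [Preorder β] {A : V → V → Prop} {S : Set V} (f : V → β)
    (h : ∀ a ∈ S, ∀ b ∈ S, A a b → f a < f b) : AcyclicOn A S := by
  intro x hx
  have hlt := Relation.TransGen.lift f (fun a b hab => h a hab.1 b hab.2.1 hab.2.2) x x hx
  rw [Relation.transGen_eq_self] at hlt
  exact lt_irrefl _ hlt

section InRound

variable {V : Type*} [Fintype V] {A : V → V → Prop} {σ : V ≃ Fin (Fintype.card V)}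

theorem tournamentOn_outNeighbors (hirr : ∀ x, ¬ A x x)
    (hσ : ∀ x y z : V, A x y → CycBtw σ x z y → A z y) (x : V) :
    TournamentOn A {y | A x y} := by
  intro y hy z hz hyz
  have hne : (σ y - σ x).val ≠ (σ z - σ x).val :=
    (Fin.sub_val_injective (σ x)).ne (σ.injective.ne hyz)
  rcases hne.lt_or_gt with h | h
  · exact .inl (hσ x z y hz (.of_sub_val_lt (fun h => hirr x (h ▸ hy)) h))
  · exact .inr (hσ x y z hy (.of_sub_val_lt (fun h => hirr x (h ▸ hz)) h))

theorem sub_val_lt_of_adj_of_inNeighbor (hor : IsOriented A)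
    (hσ : ∀ x y z : V, A x y → CycBtw σ x z y → A z y) {x a b : V} (hb : A b x)
    (hab : A a b) : (σ a - σ x).val < (σ b - σ x).val := by
  by_contra hle
  have hba : b ≠ a := fun h => hor.1 a (h ▸ hab)
  have hbx : b ≠ x := fun h => hor.1 x (h ▸ hb)
  have hlt : (σ b - σ x).val < (σ a - σ x).val :=
    lt_of_le_of_ne (not_lt.mp hle) ((Fin.sub_val_injective (σ x)).ne (σ.injective.ne hba))
  have hxab : CycBtw σ a x b := (CycBtw.of_sub_val_lt hbx hlt).rotate.rotate
  exact hor.2 b x hb (hσ a b x hab hxab)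

theorem acyclicOn_inNeighbors (hor : IsOriented A)
    (hσ : ∀ x y z : V, A x y → CycBtw σ x z y → A z y) (x : V) :
    AcyclicOn A {y | A y x} :=
  acyclicOn_of_lt (fun y => (σ y - σ x).val) fun _ _ _ hb hab =>
    sub_val_lt_of_adj_of_inNeighbor hor hσ hb hab

end InRound

theorem stmt0_general {V : Type*} [Fintype V] (A : V → V → Prop)
    (hor : IsOriented A) (hround : InRound A) :
    ∀ x : V, TournamentOn A {y | A x y} ∧ AcyclicOn A {y | A y x} := by
  obtain ⟨σ, hσ⟩ := hround
  exact fun x => ⟨tournamentOn_outNeighbors hor.1 hσ x, acyclicOn_inNeighbors hor hσ x⟩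

theorem stmt0 {V : Type*} [Fintype V] (A : V → V → Prop)
    (hor : IsOriented A) (hstrong : IsStrong A) (hround : InRound A) :
    ∀ x : V, TournamentOn A {y | A x y} ∧ AcyclicOn A {y | A y x} :=
  stmt0_general A hor hround
end

section
/- If D is a strong oriented graph such that for every vertex x, x⁺ induces a tournament and x⁻ induces an acyclic digraph, then there exists a cyclic order of the vertices of D such that for every arc xy and every z in the cyclic interval ]x,y[, zy is an arc of D. -/
/-- The set `S` induces a strong subdigraph (all paths staying inside `S`). -/
def StrongOn {V : Type*} (A : V → V → Prop) (S : Set V) : Prop :=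
  ∀ x ∈ S, ∀ y ∈ S, Relation.ReflTransGen (fun a b => a ∈ S ∧ b ∈ S ∧ A a b) x y

/-- The set `S` induces a semicomplete digraph. -/
def SemicompleteOn {V : Type*} (A : V → V → Prop) (S : Set V) : Prop :=
  ∀ x ∈ S, ∀ y ∈ S, x ≠ y → A x y ∨ A y x

/-- Out-round: a cyclic order such that for every arc `xy` and `z ∈ ]x,y[`, `xz` is an arc. -/
def OutRound {V : Type*} [Fintype V] (A : V → V → Prop) : Prop :=
  ∃ σ : V ≃ Fin (Fintype.card V), ∀ x y z : V, A x y → CycBtw σ x z y → A x z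

/-- Every out-neighbourhood induces a transitive tournament. -/
def LocallyOutTransitive {V : Type*} (A : V → V → Prop) : Prop :=
  ∀ x : V, TournamentOn A {y | A x y} ∧ AcyclicOn A {y | A x y}

/-- A hub: a nonempty set inducing a strong subdigraph, all of whose vertices are
in-neighbours of some vertex outside of it. -/
def Hub {V : Type*} (A : V → V → Prop) (H : Set V) : Prop :=
  H.Nonempty ∧ StrongOn A H ∧ ∃ x ∉ H, ∀ h ∈ H, A h x

/-- Locally semicomplete digraph: no loops, and every out- and in-neighbourhood
induces a semicomplete digraph (digons are allowed). -/
def LocallySemicomplete {V : Type*} (A : V → V → Prop) : Prop :=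
  Irreflexive A ∧ (∀ x : V, SemicompleteOn A {y | A x y}) ∧
    ∀ x : V, SemicompleteOn A {y | A y x}

/-- The underlying undirected graph is connected. -/
def ConnectedDigraph {V : Type*} (A : V → V → Prop) : Prop :=
  ∀ x y : V, Relation.ReflTransGen (fun a b => A a b ∨ A b a) x y

/-- A weak hub: a nonempty set inducing a strong subdigraph that is strictly
in-dominated or strictly out-dominated by some vertex outside of it. -/
def WeakHub {V : Type*} (A : V → V → Prop) (X : Set V) : Prop :=
  X.Nonempty ∧ StrongOn A X ∧
    ∃ x ∉ X, (∀ u ∈ X, A u x ∧ ¬ A x u) ∨ ∀ u ∈ X, A x u ∧ ¬ A u x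

/-- A set `X` is mixed if some outside vertex has both an out-neighbour and an
in-neighbour in `X`. -/
def MixedSet {V : Type*} (A : V → V → Prop) (X : Set V) : Prop :=
  ∃ x ∉ X, (∃ u ∈ X, A x u) ∧ ∃ v ∈ X, A v x

/-- `X` is an inclusion-wise maximal weak hub. -/
def MaxWeakHub {V : Type*} (A : V → V → Prop) (X : Set V) : Prop :=
  WeakHub A X ∧ ∀ Y : Set V, WeakHub A Y → X ⊆ Y → Y = X

/-!
Choose for every vertex `x` a source `f x` of the tournament `x⁺`; this needs `x⁺` to be
transitive. A directed triangle `abc` in `x⁺` is impossible: the vertices reachable from `a`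
inside `b⁻`, from `b` inside `c⁻` or from `c` inside `a⁻` form a set closed under out-arcs, so by
strong connectivity it contains `x`, and the arcs from `x` to the triangle then close a cycle in
an acyclic in-neighbourhood. If `xy` is an arc and `y ≠ f x`, then `f x → y`; so the `f`-orbit
of `x` walks inside the acyclic set `y⁻` until it hits `y`. Hence the `f`-orbit of every vertex
is all of `V`, `f` is a single cyclic permutation, and the cyclic order it defines is in-round.
-/

open Relation

section Digraph

variable {V : Type*} {A : V → V → Prop}

lemma IsStrong.exists_adj [Nontrivial V] (h : IsStrong A) (x : V) : ∃ y, A x y := by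
  obtain ⟨y, hyx⟩ := exists_ne x
  rcases (h x y).cases_head with hxy | ⟨z, hxz, -⟩
  · exact absurd hxy.symm hyx
  · exact ⟨z, hxz⟩

/-- `v` is reachable from `u` by a path inside the in-neighbourhood of `w`. -/
def InNbhdReach (A : V → V → Prop) (w u v : V) : Prop :=
  ReflTransGen (fun p q => A p w ∧ A q w ∧ A p q) u v

lemma InNbhdReach.adj {w u v : V} (h : InNbhdReach A w u v) (hu : A u w) : A v w := by
  induction h with
  | refl => exact hu
  | tail _ hpq => exact hpq.2.1

def TriangleBasin (A : V → V → Prop) (a b c v : V) : Prop :=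
  InNbhdReach A b a v ∨ InNbhdReach A c b v ∨ InNbhdReach A a c v

lemma triangleBasin_rotate {a b c v : V} :
    TriangleBasin A a b c v ↔ TriangleBasin A b c a v := by
  unfold TriangleBasin
  tauto

section Triangle

variable (hor : IsOriented A) (htour : ∀ x, TournamentOn A {y | A x y})
  (hacyc : ∀ x, AcyclicOn A {y | A y x})
include hor htour hacyc

lemma triangleBasin_of_adj {w s t q : V} (hws : A w s) (hst : A s t) (htw : A t w)
    (hwq : A w q) : TriangleBasin A w s t q := by
  by_cases hqs : q = s
  · exact hqs ▸ Or.inr (Or.inl ReflTransGen.refl)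
  rcases htour w q hwq s hws hqs with hqs' | hsq
  · exact Or.inl (ReflTransGen.single ⟨hws, hqs', hwq⟩)
  have hqt : q ≠ t := by
    rintro rfl
    exact hor.2 w q hwq htw
  rcases htour s q hsq t hst hqt with hqt' | htq
  · exact Or.inr (Or.inl (ReflTransGen.single ⟨hst, hqt', hsq⟩))
  · exact (hacyc q w (TransGen.head ⟨hwq, hsq, hws⟩
      (TransGen.head ⟨hsq, htq, hst⟩ (TransGen.single ⟨htq, hwq, htw⟩)))).elim

lemma triangleBasin_of_inNbhdReach {a b c v q : V} (hab : A a b) (hbc : A b c) (hca : A c a)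
    (hv : InNbhdReach A b a v) (hvq : A v q) : TriangleBasin A a b c q := by
  have hvb : A v b := hv.adj hab
  by_cases hqb : q = b
  · exact hqb ▸ Or.inr (Or.inl ReflTransGen.refl)
  rcases htour v q hvq b hvb hqb with hqb' | hbq
  · exact Or.inl (hv.tail ⟨hvb, hqb', hvq⟩)
  · exact triangleBasin_rotate.mpr
      (triangleBasin_of_adj hor htour hacyc hbc hca hab hbq)

lemma TriangleBasin.of_adj {a b c v q : V} (hab : A a b) (hbc : A b c) (hca : A c a)
    (hv : TriangleBasin A a b c v) (hvq : A v q) : TriangleBasin A a b c q := by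
  rcases hv with hv | hv | hv
  · exact triangleBasin_of_inNbhdReach hor htour hacyc hab hbc hca hv hvq
  · exact triangleBasin_rotate.mpr
      (triangleBasin_of_inNbhdReach hor htour hacyc hbc hca hab hv hvq)
  · exact triangleBasin_rotate.mp
      (triangleBasin_of_inNbhdReach hor htour hacyc hca hab hbc hv hvq)

lemma triangleBasin_of_reflTransGen {a b c x : V} (hab : A a b) (hbc : A b c) (hca : A c a)
    (hax : ReflTransGen A a x) : TriangleBasin A a b c x := by
  induction hax with
  | refl => exact Or.inl ReflTransGen.refl
  | tail _ hvq ih => exact ih.of_adj hor htour hacyc hab hbc hca hvq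

lemma not_adj_triangle_of_reflTransGen {a b c x : V} (hab : A a b) (hbc : A b c) (hca : A c a)
    (hax : ReflTransGen A a x) (hxa : A x a) (hxb : A x b) (hxc : A x c) : False := by
  rcases triangleBasin_of_reflTransGen hor htour hacyc hab hbc hca hax with h | h | h
  · exact hacyc b a (TransGen.tail' h ⟨hxb, hab, hxa⟩)
  · exact hacyc c b (TransGen.tail' h ⟨hxc, hbc, hxb⟩)
  · exact hacyc a c (TransGen.tail' h ⟨hxa, hca, hxc⟩)

end Triangle

lemma exists_source_of_tournamentOn [Finite V] (hor : IsOriented A) {x : V}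
    (htour : TournamentOn A {y | A x y})
    (hno : ∀ a b c, A x a → A x b → A x c → A a b → A b c → A c a → False)
    (hx : ∃ y, A x y) : ∃ s, A x s ∧ ∀ y, A x y → y ≠ s → A s y := by
  let r : {y // A x y} → {y // A x y} → Prop := fun u v => A u v
  have : IsTrans _ r := ⟨fun u v w huv hvw => by
    have huw : u.1 ≠ w.1 := fun h => hor.2 _ _ huv (h ▸ hvw)
    exact (htour u u.2 w w.2 huw).resolve_right (hno u v w u.2 v.2 w.2 huv hvw)⟩
  have : Std.Irrefl r := ⟨fun u => hor.1 u⟩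
  obtain ⟨y₀, hy₀⟩ := hx
  obtain ⟨s, -, hs⟩ :=
    (Finite.wellFounded_of_trans_of_irrefl r).has_min Set.univ ⟨⟨y₀, hy₀⟩, trivial⟩
  exact ⟨s, s.2, fun y hy hys =>
    (htour s s.2 y hy (Ne.symm hys)).resolve_right (hs ⟨y, hy⟩ trivial)⟩

lemma exists_iterate_eq_of_reflTransGen [Finite V] (hacyc : ∀ x, AcyclicOn A {y | A y x})
    {f : V → V} (hf : ∀ x, A x (f x)) (hf' : ∀ x y, A x y → y ≠ f x → A (f x) y)
    {x y : V} (h : ReflTransGen A x y) : ∃ m, f^[m] x = y := by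
  have of_adj : ∀ {x y}, A x y → ∃ m, f^[m] x = y := by
    intro x y hxy
    let r := TransGen fun a b => A a y ∧ A b y ∧ A a b
    have : IsTrans V (flip r) := ⟨fun _ _ _ hab hbc => TransGen.trans hbc hab⟩
    have : Std.Irrefl (flip r) := ⟨fun a => hacyc y a⟩
    induction x using (Finite.wellFounded_of_trans_of_irrefl (flip r)).induction with
    | _ x ih =>
      by_cases hfx : f x = y
      · exact ⟨1, hfx⟩
      · have hfxy := hf' x y hxy (Ne.symm hfx)
        obtain ⟨m, hm⟩ := ih (f x) (TransGen.single ⟨hxy, hfxy, hf x⟩) hfxy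
        exact ⟨m + 1, hm⟩
  induction h with
  | refl => exact ⟨0, rfl⟩
  | tail _ hbc ih =>
    obtain ⟨m, rfl⟩ := ih
    obtain ⟨k, hk⟩ := of_adj hbc
    exact ⟨k + m, by rw [Function.iterate_add_apply, hk]⟩

lemma exists_equiv_fin_finRotate [Fintype V] [DecidableEq V] [Nonempty V] {f : V → V}
    (hreach : ∀ u v, ∃ m, f^[m] u = v) (hfix : ∀ x, f x ≠ x) :
    ∃ σ : V ≃ Fin (Fintype.card V), ∀ z, σ (f z) = finRotate _ (σ z) := by
  have hsurj : f.Surjective := fun v => by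
    obtain ⟨m, hm⟩ := hreach (f v) v
    exact ⟨f^[m] v, by rw [← Function.iterate_succ_apply' f m v]; exact hm⟩
  let F : Equiv.Perm V := Equiv.ofBijective f ⟨Finite.injective_iff_surjective.mpr hsurj, hsurj⟩
  let e := Fintype.equivFin V
  let G := e.permCongr F
  have hG : Function.Semiconj e f G := fun z => by
    simp only [G, Equiv.permCongr_apply, Equiv.symm_apply_apply]
    rfl
  obtain ⟨x⟩ := ‹Nonempty V›
  have hcard : 2 ≤ Fintype.card V := Fintype.one_lt_card_iff.mpr ⟨f x, x, hfix x⟩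
  have hGfix : ∀ i, G i ≠ i := fun i => by
    obtain ⟨z, rfl⟩ := e.surjective i
    rw [← hG]
    exact e.injective.ne (hfix z)
  have hcyc : G.IsCycle := by
    refine ⟨e x, hGfix _, fun i _ => ?_⟩
    obtain ⟨m, hm⟩ := hreach x (e.symm i)
    refine ⟨m, ?_⟩
    rw [zpow_natCast, Equiv.Perm.coe_pow, ← hG.iterate_right m, hm, e.apply_symm_apply]
  have hsupp : G.support = Finset.univ :=
    Finset.eq_univ_of_forall fun i => Equiv.Perm.mem_support.mpr (hGfix i)
  obtain ⟨c, hc⟩ := isConj_iff.mp (hcyc.isConj (isCycle_finRotate_of_le hcard)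
    (by rw [hsupp, support_finRotate_of_le hcard]))
  refine ⟨e.trans c, fun z => ?_⟩
  rw [← hc]
  simp [Equiv.Perm.mul_apply, hG z]

lemma Fin.val_eq_of_val_add_one_eq {n : ℕ} [NeZero n] {a : Fin n} {k : ℕ}
    (h : (a + 1).val = k + 1) : a.val = k := by
  obtain ⟨m, rfl⟩ := Nat.exists_eq_succ_of_ne_zero (NeZero.ne n)
  rw [Fin.val_add_one] at h
  split_ifs at h
  omega

lemma inRound_of_finRotate [Fintype V] {f : V → V} (hf : ∀ x y, A x y → y ≠ f x → A (f x) y)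
    (σ : V ≃ Fin (Fintype.card V)) (hσ : ∀ z, σ (f z) = finRotate _ (σ z)) : InRound A := by
  refine ⟨σ, fun x y z hxy hz => ?_⟩
  have := (σ x).neZero
  have adj_of_dist : ∀ k z, (σ z - σ x).val = k → k < (σ y - σ x).val → A z y ∨ z = x := by
    intro k
    induction k with
    | zero =>
      intro z hz _
      exact Or.inr (σ.injective (sub_eq_zero.mp (Fin.ext hz)))
    | succ k ih =>
      intro z hz hlt
      obtain ⟨w, rfl⟩ : ∃ w, f w = z :=
        ⟨σ.symm ((finRotate _).symm (σ z)), σ.injective (by simp [hσ])⟩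
      have hw : (σ w - σ x).val = k := by
        rw [hσ, finRotate_apply, add_sub_right_comm] at hz
        exact Fin.val_eq_of_val_add_one_eq hz
      have hwy : A w y := (ih w hw (by omega)).elim id (fun h => h ▸ hxy)
      exact Or.inl (hf w y hwy (by rintro rfl; omega))
  refine (adj_of_dist _ z rfl hz.2).resolve_right ?_
  rintro rfl
  simp [CycBtw] at hz

end Digraph

theorem stmt1 {V : Type*} [Fintype V] (A : V → V → Prop)
    (hor : IsOriented A) (hstrong : IsStrong A)
    (hloc : ∀ x : V, TournamentOn A {y | A x y} ∧ AcyclicOn A {y | A y x}) :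
    InRound A := by
  classical
  rcases subsingleton_or_nontrivial V with hV | hV
  · refine ⟨Fintype.equivFin V, fun x y _ hxy _ => ?_⟩
    rw [Subsingleton.elim x y] at hxy
    exact (hor.1 y hxy).elim
  have htour x := (hloc x).1
  have hacyc x := (hloc x).2
  choose f hf hf' using fun x => exists_source_of_tournamentOn hor (htour x)
    (fun a b c hxa hxb hxc hab hbc hca => not_adj_triangle_of_reflTransGen hor htour hacyc
      hab hbc hca (hstrong a x) hxa hxb hxc)
    (hstrong.exists_adj x)
  have hreach u v : ∃ m, f^[m] u = v :=
    exists_iterate_eq_of_reflTransGen hacyc hf hf' (hstrong u v)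
  obtain ⟨σ, hσ⟩ :=
    exists_equiv_fin_finRotate hreach fun x h => hor.1 x (by simpa only [h] using hf x)
  exact inRound_of_finRotate hf' σ hσ
end

section
/- In a strong oriented graph D in which every in-neighbourhood induces a nonempty acyclic digraph and every out-neighbourhood induces a tournament, for every vertex x there exists a vertex f(x) ∈ x⁻ with f(x)⁺ ∩ x⁻ = ∅, and moreover f(x)⁺ \ {x} ⊆ x⁺. -/
theorem AcyclicOn.exists_sink {V : Type*} [Finite V] {A : V → V → Prop} {S : Set V}
    (hacyc : AcyclicOn A S) (hne : S.Nonempty) : ∃ f ∈ S, ∀ y ∈ S, ¬ A f y := by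
  -- reachability inside `S` is a strict order on a finite type; a maximal element is a sink
  let reach : V → V → Prop := Relation.TransGen fun a b => a ∈ S ∧ b ∈ S ∧ A a b
  have : IsTrans V (flip reach) := ⟨fun _ _ _ hab hbc => hbc.trans hab⟩
  have : Std.Irrefl (flip reach) := ⟨hacyc⟩
  obtain ⟨f, hfS, hmax⟩ := (Finite.wellFounded_of_trans_of_irrefl (flip reach)).has_min S hne
  exact ⟨f, hfS, fun y hyS hfy => hmax y hyS (.single ⟨hfS, hyS, hfy⟩)⟩

theorem stmt2_general {V : Type*} [Fintype V] (A : V → V → Prop)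
    (hin : ∀ x : V, ({y | A y x}).Nonempty ∧ AcyclicOn A {y | A y x})
    (hout : ∀ x : V, TournamentOn A {y | A x y}) :
    ∀ x : V, ∃ f : V, A f x ∧ (∀ y, A f y → ¬ A y x) ∧
      (∀ y, A f y → y ≠ x → A x y) := by
  intro x
  obtain ⟨f, hfx, hsink⟩ := (hin x).2.exists_sink (hin x).1
  have hf_out : ∀ y, A f y → ¬ A y x := fun y hfy hyx => hsink y hyx hfy
  refine ⟨f, hfx, hf_out, fun y hfy hyx => ?_⟩
  exact (hout f x hfx y hfy hyx.symm).resolve_right (hf_out y hfy)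

theorem stmt2 {V : Type*} [Fintype V] (A : V → V → Prop)
    (hor : IsOriented A) (hstrong : IsStrong A)
    (hin : ∀ x : V, ({y | A y x}).Nonempty ∧ AcyclicOn A {y | A y x})
    (hout : ∀ x : V, TournamentOn A {y | A x y}) :
    ∀ x : V, ∃ f : V, A f x ∧ (∀ y, A f y → ¬ A y x) ∧
      (∀ y, A f y → y ≠ x → A x y) :=
  stmt2_general A hin hout
end

section
/- In a strong locally out-transitive oriented graph D, if H is an inclusion-wise maximal hub, then no vertex outside H is mixed for H; that is, there is no vertex z ∉ H together with h, h' ∈ H such that both hz and zh' are arcs of D. -/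
lemma Relation.ReflTransGen.exists_rel_of_not {V : Type*} {R : V → V → Prop} {P : V → Prop}
    {u v : V} (h : Relation.ReflTransGen R u v) (hu : P u) (hv : ¬ P v) :
    ∃ a b, R a b ∧ P a ∧ ¬ P b := by
  induction h with
  | refl => exact absurd hu hv
  | @tail b c _ hbc ih =>
    by_cases hb : P b
    · exact ⟨b, c, hbc, hb, hv⟩
    · exact ih hb

section Digraph

variable {V : Type*} {A : V → V → Prop}

lemma StrongOn.mono {S T : Set V} {x y : V} (hS : StrongOn A S) (hST : S ⊆ T)
    (hx : x ∈ S) (hy : y ∈ S) :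
    Relation.ReflTransGen (fun a b => a ∈ T ∧ b ∈ T ∧ A a b) x y :=
  Relation.ReflTransGen.mono (fun _ _ ⟨ha, hb, hab⟩ => ⟨hST ha, hST hb, hab⟩) _ _ (hS x hx y hy)

lemma StrongOn.insert {H : Set V} {z w w' : V} (hH : StrongOn A H)
    (hw : w ∈ H) (hw' : w' ∈ H) (hwz : A w z) (hzw' : A z w') :
    StrongOn A (insert z H) := by
  have hsub := Set.subset_insert z H
  intro a ha b hb
  rcases ha with rfl | ha <;> rcases hb with rfl | hb
  · exact .refl
  · exact .head ⟨Set.mem_insert _ H, hsub hw', hzw'⟩ (hH.mono hsub hw' hb)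
  · exact .tail (hH.mono hsub ha hw) ⟨hsub hw, Set.mem_insert _ H, hwz⟩
  · exact hH.mono hsub ha hb

lemma hub_insert {H : Set V} {x z w w' : V} (hH : StrongOn A H) (hxH : x ∉ H)
    (hdom : ∀ h ∈ H, A h x) (hzx : A z x) (hzx_ne : z ≠ x)
    (hw : w ∈ H) (hw' : w' ∈ H) (hwz : A w z) (hzw' : A z w') :
    Hub A (insert z H) := by
  refine ⟨Set.insert_nonempty z H, hH.insert hw hw' hwz hzw', x, ?_, ?_⟩
  · rintro (rfl | hx)
    exacts [hzx_ne rfl, hxH hx]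
  · rintro u (rfl | hu)
    exacts [hzx, hdom u hu]

/-- Strong connectivity of `H` gives an arc `wk` leaving the in-neighbourhood of `z`;
as `z, k ∈ w⁺` and `kz` is not an arc, `zk` is. -/
lemma LocallyOutTransitive.exists_arc_to_of_mixed (hloc : LocallyOutTransitive A)
    {H : Set V} (hH : StrongOn A H) {z h h' : V} (hzH : z ∉ H) (hh : h ∈ H) (hh' : h' ∈ H)
    (hhz : A h z) (hh'z : ¬ A h' z) :
    ∃ w ∈ H, ∃ k ∈ H, A w z ∧ A w k ∧ A z k := by
  obtain ⟨w, k, ⟨hw, hk, hwk⟩, hwz, hkz⟩ :=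
    (hH h hh h' hh').exists_rel_of_not (P := fun u => A u z) hhz hh'z
  refine ⟨w, hw, k, hk, hwz, hwk, ?_⟩
  exact ((hloc w).1 z hwz k hwk fun e => hzH (e ▸ hk)).resolve_right hkz

lemma LocallyOutTransitive.not_rel_of_triangle (hloc : LocallyOutTransitive A)
    {w a b c : V} (ha : A w a) (hb : A w b) (hc : A w c) (hab : A a b) (hbc : A b c) :
    ¬ A c a := fun hca =>
  (hloc w).2 a (.head ⟨ha, hb, hab⟩ (.head ⟨hb, hc, hbc⟩ (.single ⟨hc, ha, hca⟩)))

end Digraph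

/-- Take an arc `wk` of `H` with `wz` and `zk`, and the vertex `x` dominated by `H`.
Both `z` and `x` lie in `w⁺`: the arc `xz` would close the triangle `z → k → x → z` there,
while `zx` makes `H ∪ {z}` a larger hub. -/
theorem stmt4_general {V : Type*} (A : V → V → Prop)
    (hor : IsOriented A) (hloc : LocallyOutTransitive A)
    (H : Set V) (hhub : Hub A H)
    (hmax : ∀ H' : Set V, Hub A H' → H ⊆ H' → H' = H) :
    ¬ ∃ z ∉ H, ∃ h ∈ H, ∃ h' ∈ H, A h z ∧ A z h' := by
  rintro ⟨z, hzH, h, hh, h', hh', hhz, hzh'⟩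
  obtain ⟨-, hH, x, hxH, hdom⟩ := hhub
  obtain ⟨w, hw, k, hk, hwz, hwk, hzk⟩ :=
    hloc.exists_arc_to_of_mixed hH hzH hh hh' hhz (hor.2 z h' hzh')
  have hzx_ne : z ≠ x := fun e => hor.2 k x (hdom k hk) (e ▸ hzk)
  rcases (hloc w).1 z hwz x (hdom w hw) hzx_ne with hzx | hxz
  · have := hmax _ (hub_insert hH hxH hdom hzx hzx_ne hw hk hwz hzk) (Set.subset_insert z H)
    exact hzH (this ▸ Set.mem_insert z H)
  · exact hloc.not_rel_of_triangle hwz hwk (hdom w hw) hzk (hdom k hk) hxz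

theorem stmt4 {V : Type*} [Fintype V] (A : V → V → Prop)
    (hor : IsOriented A) (hstrong : IsStrong A) (hloc : LocallyOutTransitive A)
    (H : Set V) (hhub : Hub A H)
    (hmax : ∀ H' : Set V, Hub A H' → H ⊆ H' → H' = H) :
    ¬ ∃ z ∉ H, ∃ h ∈ H, ∃ h' ∈ H, A h z ∧ A z h' :=
  stmt4_general A hor hloc H hhub hmax
end

section
/- Every in-round oriented graph has dichromatic number at most 2; moreover, for every vertex x there is a partition of the vertex set into two sets, each inducing an acyclic digraph, such that {x} ∪ x⁺ is contained in one of the two sets. -/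
/-!
Take `S = {x} ∪ x⁺` and rank every vertex `v` by its position `(σ v - σ x).val` in the in-round
cyclic order `σ` read from `x`. Arcs inside `S` and arcs inside its complement both increase the
rank, so neither side contains a cycle. If an arc `pq` went down, then `q ∈ ]x, p[`: inside `S`,
in-roundness applied to the arc `xp` gives the arc `qp`, a digon; outside `S`, the same betweenness
read cyclically says `x ∈ ]p, q[`, so in-roundness applied to `pq` gives `xq`, i.e. `q ∈ S`.
-/

theorem Fin.val_sub_eq_or {n : ℕ} (a b : Fin n) :
    b ≤ a ∧ (a - b).val = a.val - b.val ∨ a < b ∧ (a - b).val = n + a.val - b.val := by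
  rcases le_or_gt b a with h | h
  · exact .inl ⟨h, Fin.sub_val_of_le h⟩
  · exact .inr ⟨h, Fin.coe_sub_iff_lt.2 h⟩

theorem Fin.val_sub_left_injective {n : ℕ} (b : Fin n) :
    Function.Injective fun a : Fin n => (a - b).val := by
  intro a a' h
  have := b.is_lt
  ext
  rcases Fin.val_sub_eq_or a b with ⟨h₁, e₁⟩ | ⟨h₁, e₁⟩ <;>
    rcases Fin.val_sub_eq_or a' b with ⟨h₂, e₂⟩ | ⟨h₂, e₂⟩ <;>
    simp only [Fin.le_def, Fin.lt_def] at * <;> omega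

theorem Fin.val_sub_eq_zero_iff {n : ℕ} {a b : Fin n} : (a - b).val = 0 ↔ a = b := by
  have := b.is_lt
  rw [Fin.ext_iff]
  rcases Fin.val_sub_eq_or a b with ⟨h, e⟩ | ⟨h, e⟩ <;>
    simp only [Fin.le_def, Fin.lt_def] at h <;> omega

theorem Fin.val_sub_pos_iff {n : ℕ} {a b : Fin n} : 0 < (a - b).val ↔ a ≠ b := by
  rw [Nat.pos_iff_ne_zero, Ne, Fin.val_sub_eq_zero_iff]

/-- Cyclic betweenness is invariant under rotation: `b ∈ ]a, c[` gives `a ∈ ]c, b[`. -/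
theorem Fin.val_sub_rotate {n : ℕ} {a b c : Fin n} (hb : 0 < (b - a).val)
    (hbc : (b - a).val < (c - a).val) : 0 < (a - c).val ∧ (a - c).val < (b - c).val := by
  have := a.is_lt; have := b.is_lt; have := c.is_lt
  rcases Fin.val_sub_eq_or b a with ⟨h₁, e₁⟩ | ⟨h₁, e₁⟩ <;>
    rcases Fin.val_sub_eq_or c a with ⟨h₂, e₂⟩ | ⟨h₂, e₂⟩ <;>
    rcases Fin.val_sub_eq_or a c with ⟨h₃, e₃⟩ | ⟨h₃, e₃⟩ <;>
    rcases Fin.val_sub_eq_or b c with ⟨h₄, e₄⟩ | ⟨h₄, e₄⟩ <;>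
    simp only [Fin.le_def, Fin.lt_def] at * <;> omega

theorem CycBtw.rotate_s7 {V : Type*} [Fintype V] {σ : V ≃ Fin (Fintype.card V)} {x z y : V}
    (h : CycBtw σ x z y) : CycBtw σ y x z :=
  Fin.val_sub_rotate h.1 h.2

theorem acyclicOn_of_forall_lt {V α : Type*} [Preorder α] {A : V → V → Prop} {S : Set V}
    (f : V → α) (h : ∀ p ∈ S, ∀ q ∈ S, A p q → f p < f q) : AcyclicOn A S := by
  intro v hv
  have hlt := Relation.TransGen.lift f (p := (· < ·))
    (fun p q ⟨hp, hq, hpq⟩ => h p hp q hq hpq) v v hv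
  rw [Relation.transGen_eq_self] at hlt
  exact lt_irrefl _ hlt

section

variable {V : Type*} [Fintype V] {A : V → V → Prop} {σ : V ≃ Fin (Fintype.card V)}

theorem cycBtw_of_not_lt (hirr : ∀ a, ¬ A a a) {x p q : V} (hpq : A p q) (hqx : q ≠ x)
    (hlt : ¬ (σ p - σ x).val < (σ q - σ x).val) : CycBtw σ x q p := by
  have hne : (σ q - σ x).val ≠ (σ p - σ x).val := fun h =>
    hirr p (σ.injective (Fin.val_sub_left_injective _ h) ▸ hpq)
  exact ⟨Fin.val_sub_pos_iff.2 (σ.injective.ne hqx), lt_of_le_of_ne (not_lt.1 hlt) hne⟩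

theorem val_sub_lt_of_arc_inside_closedOutNbhd (hor : IsOriented A)
    (hσ : ∀ x y z, A x y → CycBtw σ x z y → A z y) {x p q : V}
    (hp : p ∈ insert x {y | A x y}) (hq : q ∈ insert x {y | A x y}) (hpq : A p q) :
    (σ p - σ x).val < (σ q - σ x).val := by
  obtain ⟨hirr, hasymm⟩ := hor
  have hxq : A x q := by
    rcases hq with rfl | hxq
    · rcases hp with rfl | hqp
      · exact absurd hpq (hirr p)
      · exact absurd hpq (hasymm _ _ hqp)
    · exact hxq
  have hqx : q ≠ x := by rintro rfl; exact hirr q hxq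
  rcases hp with rfl | hxp
  · rw [Fin.val_sub_eq_zero_iff.2 rfl]
    exact Fin.val_sub_pos_iff.2 (σ.injective.ne hqx)
  · by_contra hlt
    exact hasymm p q hpq (hσ x p q hxp (cycBtw_of_not_lt hirr hpq hqx hlt))

theorem val_sub_lt_of_arc_into_compl_closedOutNbhd (hirr : ∀ a, ¬ A a a)
    (hσ : ∀ x y z, A x y → CycBtw σ x z y → A z y) {x p q : V}
    (hq : q ∉ insert x {y | A x y}) (hpq : A p q) :
    (σ p - σ x).val < (σ q - σ x).val := by
  have hqx : q ≠ x := fun h => hq (.inl h)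
  by_contra hlt
  exact hq (.inr (hσ p q x hpq (cycBtw_of_not_lt hirr hpq hqx hlt).rotate_s7))

end

theorem stmt7 {V : Type*} [Fintype V] (A : V → V → Prop)
    (hor : IsOriented A) (hround : InRound A) :
    ∀ x : V, ∃ S : Set V, AcyclicOn A S ∧ AcyclicOn A Sᶜ ∧
      insert x {y | A x y} ⊆ S := by
  obtain ⟨σ, hσ⟩ := hround
  intro x
  refine ⟨insert x {y | A x y}, ?_, ?_, subset_rfl⟩
  · exact acyclicOn_of_forall_lt (fun v => (σ v - σ x).val) fun p hp q hq hpq =>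
      val_sub_lt_of_arc_inside_closedOutNbhd hor hσ hp hq hpq
  · exact acyclicOn_of_forall_lt (fun v => (σ v - σ x).val) fun p _ q hq hpq =>
      val_sub_lt_of_arc_into_compl_closedOutNbhd hor.1 hσ hq hpq
end

section
/- Let D be a strong out-round oriented graph with no directed cycle of length at most k (k ≥ 3), and let w be a positive weight function on its vertices with total weight W. Then there exists a vertex u such that k·φ(u) + w(u) ≤ W, where φ(u) = ∑_{v∈u⁺} w(v). -/
open Classical in
theorem stmt12 {V : Type*} [Fintype V] [Nonempty V] (A : V → V → Prop)
    (hor : IsOriented A) (hstrong : IsStrong A) (hround : OutRound A)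
    (k : ℕ) (hk : 3 ≤ k)
    (hcyc : ∀ (ℓ : ℕ) (c : Fin (ℓ + 1) → V), ℓ + 1 ≤ k → Function.Injective c →
      ¬ ∀ i : Fin (ℓ + 1), A (c i) (c (i + 1)))
    (w : V → ℝ) (hw : ∀ v, 0 < w v) :
    ∃ u : V, (k : ℝ) * (∑ v ∈ Finset.univ.filter (fun v => A u v), w v) + w u ≤
      ∑ v : V, w v := by
  classical
  obtain ⟨σ, hσ⟩ := hround
  haveI : NeZero (Fintype.card V) := ⟨Fintype.card_ne_zero⟩
  -- case with no arcs at all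
  by_cases harc : ∃ x y : V, A x y
  swap
  · push_neg at harc
    obtain ⟨u⟩ := ‹Nonempty V›
    refine ⟨u, ?_⟩
    have he : Finset.univ.filter (fun v => A u v) = ∅ :=
      Finset.filter_eq_empty_iff.2 (fun x _ => harc u x)
    rw [he]
    simp only [Finset.sum_empty, mul_zero, zero_add]
    exact Finset.single_le_sum (fun v _ => (hw v).le) (Finset.mem_univ u)
  obtain ⟨x0, y0, hxy0⟩ := harc
  have hirr : ∀ v : V, ¬ A v v := hor.1
  have hex : ∀ v : V, ∃ z, A v z := by
    intro v
    by_cases hv : v = x0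
    · exact ⟨y0, hv ▸ hxy0⟩
    · rcases Relation.ReflTransGen.cases_head (hstrong v x0) with h | ⟨c, hc, -⟩
      · exact absurd h hv
      · exact ⟨c, hc⟩
  -- value-zero characterization
  have hval0 : ∀ v z : V, (σ z - σ v).val = 0 ↔ z = v := by
    intro v z
    constructor
    · intro h
      have h1 : σ z - σ v = 0 := Fin.ext (by simpa using h)
      have h2 : σ z = σ v := by rwa [sub_eq_zero] at h1
      exact σ.injective h2
    · rintro rfl; simp
  -- mod-addition identity
  have hkey : ∀ p q r : Fin (Fintype.card V), ((p - q).val + (q - r).val) % (Fintype.card V) = (p - r).val := by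
    intro p q r
    calc ((p - q).val + (q - r).val) % (Fintype.card V) = ((p - q) + (q - r)).val := (Fin.val_add _ _).symm
      _ = (p - r).val := by rw [sub_add_sub_cancel]
  have hmod : ∀ a : ℕ, a < 2 * Fintype.card V → a % (Fintype.card V) = a ∨ (Fintype.card V ≤ a ∧ a % (Fintype.card V) = a - Fintype.card V) := by
    intro a ha
    rcases Nat.lt_or_ge a (Fintype.card V) with h | h
    · exact Or.inl (Nat.mod_eq_of_lt h)
    · exact Or.inr ⟨h, by rw [Nat.mod_eq_sub_mod h, Nat.mod_eq_of_lt (by omega)]⟩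
  -- the farthest out-neighbour
  have hf' : ∀ v : V, ∃ y, A v y ∧ ∀ z, A v z → (σ z - σ v).val ≤ (σ y - σ v).val := by
    intro v
    obtain ⟨z0, hz0⟩ := hex v
    obtain ⟨y, hy, hmax⟩ := Finset.exists_max_image
      (Finset.univ.filter (fun z => A v z)) (fun z => (σ z - σ v).val)
      ⟨z0, by simp [hz0]⟩
    exact ⟨y, (Finset.mem_filter.1 hy).2, fun z hz => hmax z (by simp [hz])⟩
  choose f hfA hfmax using hf'
  -- out-neighbourhoods are intervals
  have hinterval : ∀ v z : V, A v z ↔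
      (0 < (σ z - σ v).val ∧ (σ z - σ v).val ≤ (σ (f v) - σ v).val) := by
    intro v z
    constructor
    · intro h
      refine ⟨Nat.pos_of_ne_zero (fun h0 => ?_), hfmax v z h⟩
      exact hirr v ((hval0 v z).1 h0 ▸ h)
    · rintro ⟨h1, h2⟩
      rcases eq_or_lt_of_le h2 with he | hlt
      · have : σ z - σ v = σ (f v) - σ v := Fin.ext he
        have : σ z = σ (f v) := by
          have := congrArg (· + σ v) this
          simpa [sub_add_cancel] using this
        have : z = f v := σ.injective this
        exact this ▸ hfA v
      · exact hσ v (f v) z (hfA v) ⟨h1, hlt⟩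
  -- choose u minimizing the out-neighbourhood weight
  set φ : V → ℝ := fun v => ∑ z ∈ Finset.univ.filter (fun z => A v z), w z with hφ
  obtain ⟨u, -, hu⟩ := Finset.exists_min_image Finset.univ φ Finset.univ_nonempty
  set g : ℕ → V := fun i => f^[i] u with hgdef
  have hg : ∀ i, g (i + 1) = f (g i) := fun i => Function.iterate_succ_apply' f i u
  have hg0 : g 0 = u := rfl
  set d : ℕ → ℕ := fun i => (σ (g i) - σ u).val with hddef
  have hd0 : d 0 = 0 := by simp [hddef, hg0]
  have hdlt : ∀ i, d i < Fintype.card V := fun i => (σ (g i) - σ u).isLt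
  have hspos : ∀ v : V, 0 < (σ (f v) - σ v).val := by
    intro v
    exact ((hinterval v (f v)).1 (hfA v)).1
  have hslt : ∀ v : V, (σ (f v) - σ v).val < Fintype.card V := fun v => (σ (f v) - σ v).isLt
  have hseq : ∀ i, ((σ (g (i + 1)) - σ (g i)).val + d i) % (Fintype.card V) = d (i + 1) :=
    fun i => hkey (σ (g (i + 1))) (σ (g i)) (σ u)
  -- the walk strictly advances without wrapping
  have hmono : ∀ i, i ≤ k → ∀ j, j < i → d j < d (j + 1) := by
    intro i
    induction i with
    | zero => omega
    | succ m ih =>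
      intro hm j hj
      have H : ∀ j, j < m → d j < d (j + 1) := ih (by omega)
      rcases Nat.lt_succ_iff_lt_or_eq.1 hj with hj' | rfl
      · exact H j hj'
      · -- main step
        have hs := hseq j
        have h1 : 0 < (σ (g (j + 1)) - σ (g j)).val := by rw [hg]; exact hspos (g j)
        have h2 : (σ (g (j + 1)) - σ (g j)).val < Fintype.card V := (σ (g (j + 1)) - σ (g j)).isLt
        have h3 := hdlt j
        have h4 := hdlt (j + 1)
        set s := (σ (g (j + 1)) - σ (g j)).val with hsdef
        by_cases hlt : s + d j < Fintype.card V
        · rw [Nat.mod_eq_of_lt hlt] at hs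
          omega
        · exfalso
          have hdjpos : 0 < d j := by omega
          set t := (σ u - σ (g j)).val with htdef
          have htlt : t < Fintype.card V := (σ u - σ (g j)).isLt
          have ht0 : (t + d j) % (Fintype.card V) = 0 := by
            have := hkey (σ u) (σ (g j)) (σ u)
            simpa [hddef] using this
          have htn : t + d j = Fintype.card V := by
            rcases hmod (t + d j) (by omega) with h | ⟨h5, h6⟩ <;> omega
          have hAu : A (g j) u := by
            refine (hinterval (g j) u).2 ⟨by omega, ?_⟩
            have : (σ (f (g j)) - σ (g j)).val = s := by rw [hsdef, hg]
            omega
          -- d is strictly increasing up to j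
          have hdinc : ∀ b, b ≤ j → ∀ a, a < b → d a < d b := by
            intro b
            induction b with
            | zero => omega
            | succ p ihp =>
              intro hb a ha
              have h5 : d p < d (p + 1) := H p (by omega)
              rcases Nat.lt_succ_iff_lt_or_eq.1 ha with h6 | rfl
              · exact (ihp (by omega) a h6).trans h5
              · exact h5
          have hinj : Function.Injective (fun i : Fin (j + 1) => g i.val) := by
            intro a b hab
            simp only at hab
            have hda : d a.val = d b.val := by rw [hddef]; simp [hab]
            by_contra hne
            have hne' : a.val ≠ b.val := fun h => hne (Fin.ext h)
            rcases Nat.lt_or_ge a.val b.val with h6 | h6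
            · exact absurd hda (Nat.ne_of_lt (hdinc b.val (by omega) a.val h6))
            · have h7 : b.val < a.val := by omega
              exact absurd hda.symm (Nat.ne_of_lt (hdinc a.val (by omega) b.val h7))
          refine hcyc j (fun i : Fin (j + 1) => g i.val) (by omega) hinj ?_
          intro i
          by_cases hij : i = Fin.last j
          · have h6 : i + 1 = 0 := by rw [hij, Fin.last_add_one]
            rw [h6, hij]
            simpa [hg0] using hAu
          · have h6 : ((i + 1) : Fin (j + 1)).val = i.val + 1 :=
              Fin.val_add_one_of_lt (Fin.lt_last_iff_ne_last.2 hij)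
            show A (g i.val) (g ((i + 1) : Fin (j + 1)).val)
            rw [h6, hg i.val]
            exact hfA (g i.val)
  have Hm : ∀ j, j < k → d j < d (j + 1) := hmono k le_rfl
  -- exact step values
  have Hstep : ∀ j, j < k → d (j + 1) = d j + (σ (g (j + 1)) - σ (g j)).val := by
    intro j hj
    have hs := hseq j
    have := Hm j hj
    have h2 : (σ (g (j + 1)) - σ (g j)).val < Fintype.card V := (σ (g (j + 1)) - σ (g j)).isLt
    have h3 := hdlt j
    have h4 := hdlt (j + 1)
    rcases hmod ((σ (g (j + 1)) - σ (g j)).val + d j) (by omega) with h | ⟨h5, h6⟩ <;> omega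
  -- weak monotonicity up to k
  have hmono2 : ∀ p q, q ≤ k → p ≤ q → d p ≤ d q := by
    intro p q
    induction q with
    | zero =>
      intro _ hp
      have : p = 0 := by omega
      rw [this]
    | succ m ih =>
      intro hq hpq
      rcases Nat.lt_succ_iff_lt_or_eq.1 (Nat.lt_succ_of_le hpq) with h | rfl
      · exact (ih (by omega) (by omega)).trans (Hm m (by omega)).le
      · rfl
  -- characterization of the out-neighbourhood of g j in terms of positions
  have hfiltmem : ∀ j, j < k → ∀ z : V,
      A (g j) z ↔ (d j < (σ z - σ u).val ∧ (σ z - σ u).val ≤ d (j + 1)) := by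
    intro j hj z
    have hstep := Hstep j hj
    have hkz : ((σ z - σ (g j)).val + d j) % (Fintype.card V) = (σ z - σ u).val := hkey _ _ _
    have h1 : (σ z - σ (g j)).val < Fintype.card V := (σ z - σ (g j)).isLt
    have h2 : (σ (f (g j)) - σ (g j)).val = (σ (g (j + 1)) - σ (g j)).val := by rw [hg]
    have h3 := hdlt j
    have h4 := hdlt (j + 1)
    have h5 : (σ z - σ u).val < Fintype.card V := (σ z - σ u).isLt
    rw [hinterval]
    rcases hmod ((σ z - σ (g j)).val + d j) (by omega) with h | ⟨h6, h7⟩ <;>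
      constructor <;> rintro ⟨ha, hb⟩ <;> omega
  -- disjointness of the k out-neighbourhoods
  set S : ℕ → Finset V := fun j => Finset.univ.filter (fun z => A (g j) z) with hSdef
  have hD : ∀ a b, a < b → b < k → Disjoint (S a) (S b) := by
    intro a b hab hb
    rw [Finset.disjoint_left]
    intro z hza hzb
    have h1 := (hfiltmem a (by omega) z).1 (Finset.mem_filter.1 hza).2
    have h2 := (hfiltmem b hb z).1 (Finset.mem_filter.1 hzb).2
    have h3 : d (a + 1) ≤ d b := hmono2 (a + 1) b (by omega) (by omega)
    omega
  have hdisj : (↑(Finset.range k) : Set ℕ).PairwiseDisjoint S := by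
    intro a ha b hb hab
    simp only [Finset.coe_range, Set.mem_Iio] at ha hb
    rcases Nat.lt_or_ge a b with h | h
    · exact hD a b h hb
    · exact (hD b a (by omega) ha).symm
  have hsum1 : ∑ x ∈ (Finset.range k).biUnion S, w x = ∑ j ∈ Finset.range k, φ (g j) :=
    Finset.sum_biUnion hdisj
  have hu_not : u ∉ (Finset.range k).biUnion S := by
    intro h
    obtain ⟨j, hj, hjS⟩ := Finset.mem_biUnion.1 h
    have h1 := (hfiltmem j (Finset.mem_range.1 hj) u).1 (Finset.mem_filter.1 hjS).2
    have h0 : (σ u - σ u).val = 0 := by simp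
    omega
  have hsum2 : w u + ∑ x ∈ (Finset.range k).biUnion S, w x ≤ ∑ v : V, w v := by
    rw [← Finset.sum_insert hu_not]
    exact Finset.sum_le_sum_of_subset_of_nonneg (Finset.subset_univ _)
      (fun i _ _ => (hw i).le)
  have hk' : (k : ℝ) * φ u ≤ ∑ j ∈ Finset.range k, φ (g j) := by
    have := Finset.card_nsmul_le_sum (Finset.range k) (fun j => φ (g j)) (φ u)
      (fun j _ => hu (g j) (Finset.mem_univ _))
    simpa [Finset.card_range, nsmul_eq_mul] using this
  exact ⟨u, by linarith⟩
end

section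
/- Let D be a connected locally semicomplete digraph in which no maximal weak hub is mixed. If X and Y are two distinct maximal weak hubs of D, then X ∩ Y = ∅. -/
/-!
If two maximal weak hubs `X` and `Y` share a vertex `z`, let `x ∉ X` strictly in-dominate `X`.
Since `Y` is not mixed, no vertex outside `Y` has both an in- and an out-neighbour in `Y`.
If `x ∈ Y`, every vertex of `X` has the out-neighbour `x` in `Y`, so walking along `X` from `z`
never leaves `Y` and `X ⊆ Y`. If `x ∉ Y`, then `x` has the in-neighbour `z` in `Y`, hence no
out-neighbour there, and semicompleteness of out-neighbourhoods propagates the arc `v → x` along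
`Y`; so `x` strictly in-dominates the strong set `X ∪ Y`. Either way maximality gives `X = Y`.
The strictly out-dominated case is the same argument in the reversed digraph `flip A`.
-/

section

variable {V : Type*} {A : V → V → Prop}

lemma reflTransGen_induced_mono {S T : Set V} (hST : S ⊆ T) {a b : V}
    (h : Relation.ReflTransGen (fun a b => a ∈ S ∧ b ∈ S ∧ A a b) a b) :
    Relation.ReflTransGen (fun a b => a ∈ T ∧ b ∈ T ∧ A a b) a b :=
  Relation.ReflTransGen.mono (fun _ _ hab => ⟨hST hab.1, hST hab.2.1, hab.2.2⟩) _ _ h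

lemma StrongOn.union {X Y : Set V} (hX : StrongOn A X) (hY : StrongOn A Y) {z : V}
    (hzX : z ∈ X) (hzY : z ∈ Y) : StrongOn A (X ∪ Y) := by
  have liftX {a b : V} := reflTransGen_induced_mono (A := A) (a := a) (b := b)
    (Set.subset_union_left (s := X) (t := Y))
  have liftY {a b : V} := reflTransGen_induced_mono (A := A) (a := a) (b := b)
    (Set.subset_union_right (s := X) (t := Y))
  rintro p (hp | hp) q (hq | hq)
  · exact liftX (hX p hp q hq)
  · exact (liftX (hX p hp z hzX)).trans (liftY (hY z hzY q hq))
  · exact (liftY (hY p hp z hzY)).trans (liftX (hX z hzX q hq))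
  · exact liftY (hY p hp q hq)

lemma StrongOn.flip {S : Set V} (hS : StrongOn A S) : StrongOn (flip A) S :=
  fun x hx y hy => Relation.ReflTransGen.mono (fun _ _ hab => ⟨hab.2.1, hab.1, hab.2.2⟩) _ _
    (.swap _ _ (hS y hy x hx))

lemma SemicompleteOn.flip {S : Set V} (hS : SemicompleteOn A S) : SemicompleteOn (flip A) S :=
  fun x hx y hy hxy => (hS x hx y hy hxy).symm

lemma not_mixedSet_flip {S : Set V} (hS : ¬ MixedSet A S) : ¬ MixedSet (flip A) S :=
  fun ⟨x, hx, hout, hin⟩ => hS ⟨x, hx, hin, hout⟩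

lemma subset_of_not_mixedSet {X Y : Set V} (hY : ¬ MixedSet A Y) (hXs : StrongOn A X) {z : V}
    (hzX : z ∈ X) (hzY : z ∈ Y) (hXY : ∀ u ∈ X, ∃ y ∈ Y, A u y) : X ⊆ Y := by
  intro u hu
  have path := hXs z hzX u hu
  clear hu
  induction path with
  | refl => exact hzY
  | tail _ hbc ih =>
    by_contra hc
    obtain ⟨y, hy, hcy⟩ := hXY _ hbc.2.1
    exact hY ⟨_, hc, ⟨y, hy, hcy⟩, ⟨_, ih, hbc.2.2⟩⟩

lemma strictlyInDominates_of_not_mixedSet (hsc : ∀ v, SemicompleteOn A {y | A v y}) {Y : Set V}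
    (hY : ¬ MixedSet A Y) (hYs : StrongOn A Y) {x z : V} (hxY : x ∉ Y) (hzY : z ∈ Y)
    (hzx : A z x) : ∀ v ∈ Y, A v x ∧ ¬ A x v := by
  have hnotout : ∀ v ∈ Y, ¬ A x v := fun v hv hxv => hY ⟨x, hxY, ⟨v, hv, hxv⟩, ⟨z, hzY, hzx⟩⟩
  intro v hv
  refine ⟨?_, hnotout v hv⟩
  have path := hYs z hzY v hv
  clear hv
  induction path with
  | refl => exact hzx
  | tail _ hbc ih =>
    have hcx : _ ≠ x := fun h => hxY (h ▸ hbc.2.1)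
    exact (hsc _ _ hbc.2.2 x ih hcx).resolve_right (hnotout _ hbc.2.1)

lemma subset_or_strictlyInDominates_union (hsc : ∀ v, SemicompleteOn A {y | A v y})
    {X Y : Set V} (hXs : StrongOn A X) (hYs : StrongOn A Y) (hY : ¬ MixedSet A Y) {z x : V}
    (hzX : z ∈ X) (hzY : z ∈ Y) (hxX : x ∉ X) (hx : ∀ u ∈ X, A u x ∧ ¬ A x u) :
    X ⊆ Y ∨ x ∉ X ∪ Y ∧ ∀ u ∈ X ∪ Y, A u x ∧ ¬ A x u := by
  by_cases hxY : x ∈ Y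
  · exact .inl (subset_of_not_mixedSet hY hXs hzX hzY fun u hu => ⟨x, hxY, (hx u hu).1⟩)
  · have hYx := strictlyInDominates_of_not_mixedSet hsc hY hYs hxY hzY (hx z hzX).1
    refine .inr ⟨fun h => h.elim hxX hxY, ?_⟩
    rintro u (hu | hu)
    exacts [hx u hu, hYx u hu]

lemma WeakHub.subset_or_weakHub_union (hls : LocallySemicomplete A) {X Y : Set V}
    (hX : WeakHub A X) (hYs : StrongOn A Y) (hY : ¬ MixedSet A Y) {z : V} (hzX : z ∈ X)
    (hzY : z ∈ Y) : X ⊆ Y ∨ WeakHub A (X ∪ Y) := by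
  obtain ⟨-, hXs, x, hxX, hin | hout⟩ := hX
  · refine (subset_or_strictlyInDominates_union hls.2.1 hXs hYs hY hzX hzY hxX hin).imp_right ?_
    exact fun ⟨hxXY, hdom⟩ => ⟨⟨z, .inl hzX⟩, hXs.union hYs hzX hzY, x, hxXY, .inl hdom⟩
  · refine (subset_or_strictlyInDominates_union (A := flip A) (fun v => (hls.2.2 v).flip)
      hXs.flip hYs.flip (not_mixedSet_flip hY) hzX hzY hxX hout).imp_right ?_
    exact fun ⟨hxXY, hdom⟩ => ⟨⟨z, .inl hzX⟩, hXs.union hYs hzX hzY, x, hxXY, .inr hdom⟩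

end

theorem stmt14_general {V : Type*} (A : V → V → Prop)
    (hls : LocallySemicomplete A)
    (hnomix : ∀ Z : Set V, MaxWeakHub A Z → ¬ MixedSet A Z)
    (X Y : Set V) (hX : MaxWeakHub A X) (hY : MaxWeakHub A Y) (hne : X ≠ Y) :
    X ∩ Y = ∅ := by
  rw [Set.eq_empty_iff_forall_notMem]
  rintro z ⟨hzX, hzY⟩
  rcases hX.1.subset_or_weakHub_union hls hY.1.2.1 (hnomix Y hY) hzX hzY with hXY | hXY
  · exact hne (hX.2 Y hY.1 hXY).symm
  · exact hne ((hX.2 _ hXY Set.subset_union_left).symm.trans (hY.2 _ hXY Set.subset_union_right))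

theorem stmt14 {V : Type*} [Fintype V] (A : V → V → Prop)
    (hls : LocallySemicomplete A) (hconn : ConnectedDigraph A)
    (hnomix : ∀ Z : Set V, MaxWeakHub A Z → ¬ MixedSet A Z)
    (X Y : Set V) (hX : MaxWeakHub A X) (hY : MaxWeakHub A Y) (hne : X ≠ Y) :
    X ∩ Y = ∅ :=
  stmt14_general A hls hnomix X Y hX hY hne
end

section
/- Let D be a connected locally semicomplete digraph that is not a semicomplete digraph with a universal vertex, and in which no maximal weak hub is mixed. Then every vertex of D belongs to some weak hub; in particular every singleton {u} is a weak hub. -/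
/-!
If `{u}` is not a weak hub, then every arc at `u` has its reverse, so every neighbour of `u` is
both an in- and an out-neighbour of `u`. Local semicompleteness at such a neighbour `s` makes any
further neighbour of `s` comparable with `u`, so the closed neighbourhood of `u` is closed under
adjacency. By connectivity it is everything: `D` is semicomplete (two vertices of `N⁺(u)` are
comparable) with `u` universal.
-/

section

variable {V : Type*} {A : V → V → Prop}

theorem strongOn_singleton (u : V) : StrongOn A {u} := by
  rintro x rfl y rfl
  exact .refl

theorem ConnectedDigraph.mem_of_adj_closed (hconn : ConnectedDigraph A) {S : Set V} {a : V}
    (ha : a ∈ S) (hS : ∀ s ∈ S, ∀ y, A s y ∨ A y s → y ∈ S) (y : V) : y ∈ S := by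
  induction hconn a y with
  | refl => exact ha
  | tail _ hbc ih => exact hS _ ih _ hbc

theorem weakHub_singleton_of_not_iff {u x : V} (hx : ¬ (A u x ↔ A x u)) : WeakHub A {u} := by
  have hxu : x ∉ ({u} : Set V) := by
    rintro rfl
    exact hx Iff.rfl
  refine ⟨Set.singleton_nonempty u, strongOn_singleton u, x, hxu, ?_⟩
  by_cases hux : A u x
  · exact .inl fun v hv => hv ▸ ⟨hux, fun hxu' => hx (iff_of_true hux hxu')⟩
  · exact .inr fun v hv => hv ▸ ⟨not_not.mp fun hxu' => hx (iff_of_false hux hxu'), hux⟩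

theorem LocallySemicomplete.adj_closed_insert_outNbhd (hls : LocallySemicomplete A) {u : V}
    (htwin : ∀ x, A u x ↔ A x u) :
    ∀ s ∈ insert u {x | A u x}, ∀ y, A s y ∨ A y s → y ∈ insert u {x | A u x} := by
  obtain ⟨-, hout, hin⟩ := hls
  rintro s hs y hsy
  by_cases hyu : y = u
  · exact hyu ▸ Set.mem_insert y _
  refine Set.mem_insert_of_mem _ ?_
  have huy : A u y ∨ A y u → A u y := fun h => h.elim id (htwin y).mpr
  rcases hs with rfl | hus
  · exact huy hsy
  · have hsu : A s u := (htwin s).mp hus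
    rcases hsy with hsy | hys
    · exact huy (hout s u hsu y hsy (Ne.symm hyu))
    · exact huy (hin s u hus y hys (Ne.symm hyu))

theorem LocallySemicomplete.semicomplete_with_universal_of_twin (hls : LocallySemicomplete A)
    (hconn : ConnectedDigraph A) {u : V} (htwin : ∀ x, A u x ↔ A x u) :
    (∀ x y : V, x ≠ y → A x y ∨ A y x) ∧ ∃ x : V, ∀ y : V, y ≠ x → A x y ∧ A y x := by
  have hmem : ∀ y, y ∈ insert u {x | A u x} :=
    hconn.mem_of_adj_closed (Set.mem_insert u _) (hls.adj_closed_insert_outNbhd htwin)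
  have hadj : ∀ y, y ≠ u → A u y := fun y hyu => (hmem y).resolve_left hyu
  refine ⟨fun x y hxy => ?_, u, fun y hyu => ⟨hadj y hyu, (htwin y).mp (hadj y hyu)⟩⟩
  by_cases hxu : x = u
  · exact .inl (hxu ▸ hadj y (hxu ▸ hxy).symm)
  by_cases hyu : y = u
  · exact .inr (hyu ▸ hadj x (hyu ▸ hxy))
  exact hls.2.1 u x (hadj x hxu) y (hadj y hyu) hxy

end

theorem stmt15_general {V : Type*} (A : V → V → Prop)
    (hls : LocallySemicomplete A) (hconn : ConnectedDigraph A)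
    (hnotsemi : ¬ ((∀ x y : V, x ≠ y → A x y ∨ A y x) ∧
      ∃ x : V, ∀ y : V, y ≠ x → A x y ∧ A y x)) :
    ∀ u : V, WeakHub A {u} := by
  intro u
  by_contra hu
  exact hnotsemi <| hls.semicomplete_with_universal_of_twin hconn fun x =>
    not_not.mp fun hx => hu (weakHub_singleton_of_not_iff hx)

theorem stmt15 {V : Type*} [Fintype V] (A : V → V → Prop)
    (hls : LocallySemicomplete A) (hconn : ConnectedDigraph A)
    (hnotsemi : ¬ ((∀ x y : V, x ≠ y → A x y ∨ A y x) ∧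
      ∃ x : V, ∀ y : V, y ≠ x → A x y ∧ A y x))
    (hnomix : ∀ Z : Set V, MaxWeakHub A Z → ¬ MixedSet A Z) :
    ∀ u : V, WeakHub A {u} :=
  stmt15_general A hls hconn hnotsemi
end

section
/- Suppose the vertex set of a digraph D is partitioned into four sets E, F, G, H such that H is nonempty, E strictly out-dominates F, F strictly out-dominates G, G out-dominates H, H out-dominates E, each part induces a semicomplete digraph, and every vertex of G has an out-neighbour in E. Then any 2-king of the semicomplete digraph induced by G is a 2-king of D. -/
theorem stmt19_general {V : Type*} (A : V → V → Prop)
    (E F G H : Set V)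
    (hpart : E ∪ F ∪ G ∪ H = Set.univ)
    (hHne : H.Nonempty)
    (hEdF : ∀ e ∈ E, ∀ f ∈ F, A e f ∧ ¬ A f e)
    (hGdH : ∀ g ∈ G, ∀ h ∈ H, A g h)
    (hHdE : ∀ h ∈ H, ∀ e ∈ E, A h e)
    (hGE : ∀ g ∈ G, ∃ e ∈ E, A g e)
    (g : V) (hg : g ∈ G)
    (hking : ∀ y ∈ G, y ≠ g → A g y ∨ ∃ z ∈ G, A g z ∧ A z y) :
    ∀ y : V, y ≠ g → A g y ∨ ∃ z : V, A g z ∧ A z y := by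
  intro y hy
  have hyV : y ∈ E ∪ F ∪ G ∪ H := hpart ▸ Set.mem_univ y
  rcases hyV with ((hyE | hyF) | hyG) | hyH
  · obtain ⟨h, hh⟩ := hHne
    exact Or.inr ⟨h, hGdH g hg h hh, hHdE h hh y hyE⟩
  · obtain ⟨e, he, hge⟩ := hGE g hg
    exact Or.inr ⟨e, hge, (hEdF e he y hyF).1⟩
  · exact (hking y hyG hy).imp_right fun ⟨z, _, hgz, hzy⟩ => ⟨z, hgz, hzy⟩
  · exact Or.inl (hGdH g hg y hyH)

theorem stmt19 {V : Type*} [Fintype V] (A : V → V → Prop)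
    (E F G H : Set V)
    (hpart : E ∪ F ∪ G ∪ H = Set.univ)
    (hEF : Disjoint E F) (hEG : Disjoint E G) (hEH : Disjoint E H)
    (hFG : Disjoint F G) (hFH : Disjoint F H) (hGH : Disjoint G H)
    (hHne : H.Nonempty)
    (hsE : SemicompleteOn A E) (hsF : SemicompleteOn A F)
    (hsG : SemicompleteOn A G) (hsH : SemicompleteOn A H)
    (hEdF : ∀ e ∈ E, ∀ f ∈ F, A e f ∧ ¬ A f e)
    (hFdG : ∀ f ∈ F, ∀ g ∈ G, A f g ∧ ¬ A g f)
    (hGdH : ∀ g ∈ G, ∀ h ∈ H, A g h)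
    (hHdE : ∀ h ∈ H, ∀ e ∈ E, A h e)
    (hGE : ∀ g ∈ G, ∃ e ∈ E, A g e)
    (g : V) (hg : g ∈ G)
    (hking : ∀ y ∈ G, y ≠ g → A g y ∨ ∃ z ∈ G, A g z ∧ A z y) :
    ∀ y : V, y ≠ g → A g y ∨ ∃ z : V, A g z ∧ A z y :=
  stmt19_general A E F G H hpart hHne hEdF hGdH hHdE hGE g hg hking
end
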